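/- For integers k > l ≥ 1 and c_1, …, c_l with c_l > 2, one has E^♭_k(c_1,…,c_l, 2^{(k−l)})_q − E^♭_{k−1}(c_1,…,c_l, 2^{(k−l−1)})_q = E^♯_{k+1}(c_1,…,c_l, 2^{(k−l+1)})_q − E^♯_k(c_1,…,c_l, 2^{(k−l)})_q, where 2^{(j)} denotes j consecutive entries equal to 2. -/

import Mathlib

noncomputable section

/-- The field ℚ(q) of rational functions over ℚ. -/
abbrev K : Type := RatFunc ℚ

/-- The variable q. -/
def q : K := RatFunc.X

/-- Right q-integer `[n]^♯` with deformation parameter `x`. -/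
def qsX (x : K) (n : ℤ) : K := (1 - x ^ n) / (1 - x)

/-- Left q-integer `[n]^♭` with deformation parameter `x`. -/
def qfX (x : K) (n : ℤ) : K := (1 - x ^ (n - 1) + x ^ n - x ^ (n + 1)) / (1 - x)

/-- Right q-integer `[n]^♯_q`. -/
def qs (n : ℤ) : K := qsX q n

/-- Left q-integer `[n]^♭_q`. -/
def qf (n : ℤ) : K := qfX q n

/-- Right q-deformed Euler continuant `E^♯` (first-row expansion of the
tridiagonal determinant), with parameter `x`. -/
def EsharpX (x : K) : List ℤ → K
  | [] => 1
  | [c] => qsX x c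
  | c :: d :: rest => qsX x c * EsharpX x (d :: rest) - x ^ (c - 1) * EsharpX x rest

/-- Left q-deformed Euler continuant `E^♭` (first-row expansion of the
tridiagonal determinant whose (k,k) entry is the left q-integer), with parameter `x`. -/
def EflatX (x : K) : List ℤ → K
  | [] => 1
  | [c] => qfX x c
  | c :: d :: rest => qsX x c * EflatX x (d :: rest) - x ^ (c - 1) * EflatX x rest

def Esharp (L : List ℤ) : K := EsharpX q L

def Eflat (L : List ℤ) : K := EflatX q L

/-- `E^♯_{j-1}(d_2,…,d_j)` for the input list `(d_1,…,d_j)`, with the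
convention `E^♯_{-1}() = 0` when the list is empty. -/
def EsharpD : List ℤ → K
  | [] => 0
  | _ :: rest => Esharp rest

/-- `E^♭_{j-1}(d_2,…,d_j)` for the input list `(d_1,…,d_j)`, with the
convention `E^♭_{-1}() = 1 - q` when the list is empty. -/
def EflatD : List ℤ → K
  | [] => 1 - q
  | _ :: rest => Eflat rest

/-- Left q-deformed negative continued fraction `[[c_1,…,c_k]]^♭_q`. -/
def nflat : List ℤ → K
  | [] => 0
  | [c] => qf c
  | c :: d :: rest => qs c - q ^ (c - 1) / nflat (d :: rest)

/-- Right q-deformed negative continued fraction `[[c_1,…,c_k]]^♯_q`. -/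
def nsharp : List ℤ → K
  | [] => 0
  | [c] => qs c
  | c :: d :: rest => qs c - q ^ (c - 1) / nsharp (d :: rest)

/-- Left q-deformed regular continued fraction, with alternating parameter `x`, `x⁻¹`. -/
def regFlatX : K → List ℤ → K
  | _, [] => 0
  | x, [a] => qfX x a
  | x, a :: d :: rest => qsX x a + x ^ a / regFlatX x⁻¹ (d :: rest)

/-- Left q-deformed regular continued fraction `[a_1,…,a_{2m}]^♭_q`. -/
def regFlat (L : List ℤ) : K := regFlatX q L

/-- Classical negative continued fraction `[[c_1,…,c_k]] ∈ ℚ`. -/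
def negCF : List ℤ → ℚ
  | [] => 0
  | [c] => c
  | c :: d :: rest => c - 1 / negCF (d :: rest)

/-- Classical regular continued fraction `[a_1,…,a_{2m}] ∈ ℚ`. -/
def regCF : List ℤ → ℚ
  | [] => 0
  | [a] => a
  | a :: d :: rest => a + 1 / regCF (d :: rest)

/-- The matrix σ_{1,q} as an invertible 2×2 matrix over ℚ(q). -/
def σ1 : (Matrix (Fin 2) (Fin 2) K)ˣ where
  val := !![q⁻¹, -q⁻¹; 0, 1]
  inv := !![q, 1; 0, 1]
  val_inv := by
    have hq : (q : K) ≠ 0 := RatFunc.X_ne_zero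
    ext i j
    fin_cases i <;> fin_cases j <;>
      simp [Matrix.mul_apply, Fin.sum_univ_two, inv_mul_cancel₀ hq]
  inv_val := by
    have hq : (q : K) ≠ 0 := RatFunc.X_ne_zero
    ext i j
    fin_cases i <;> fin_cases j <;>
      simp [Matrix.mul_apply, Fin.sum_univ_two, mul_inv_cancel₀ hq]

/-- The matrix σ_{2,q} as an invertible 2×2 matrix over ℚ(q). -/
def σ2 : (Matrix (Fin 2) (Fin 2) K)ˣ where
  val := !![1, 0; 1, q⁻¹]
  inv := !![1, 0; -q, q]
  val_inv := by
    have hq : (q : K) ≠ 0 := RatFunc.X_ne_zero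
    ext i j
    fin_cases i <;> fin_cases j <;>
      simp [Matrix.mul_apply, Fin.sum_univ_two, inv_mul_cancel₀ hq]
  inv_val := by
    have hq : (q : K) ≠ 0 := RatFunc.X_ne_zero
    ext i j
    fin_cases i <;> fin_cases j <;>
      simp [Matrix.mul_apply, Fin.sum_univ_two, mul_inv_cancel₀ hq]

/-- The matrix S_q as an invertible 2×2 matrix over ℚ(q). -/
def Sq : (Matrix (Fin 2) (Fin 2) K)ˣ where
  val := !![0, -q⁻¹; 1, 0]
  inv := !![0, 1; -q, 0]
  val_inv := by
    have hq : (q : K) ≠ 0 := RatFunc.X_ne_zero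
    ext i j
    fin_cases i <;> fin_cases j <;>
      simp [Matrix.mul_apply, Fin.sum_univ_two, inv_mul_cancel₀ hq]
  inv_val := by
    have hq : (q : K) ≠ 0 := RatFunc.X_ne_zero
    ext i j
    fin_cases i <;> fin_cases j <;>
      simp [Matrix.mul_apply, Fin.sum_univ_two, mul_inv_cancel₀ hq]

/-- The product σ_{1,q}^{-c_1}·S_q·σ_{1,q}^{-c_2}·S_q⋯σ_{1,q}^{-c_k}·S_q. -/
def prodCS : List ℤ → (Matrix (Fin 2) (Fin 2) K)ˣ
  | [] => 1
  | c :: rest => σ1 ^ (-c) * Sq * prodCS rest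

/-- The product σ_{1,q}^{-a_1}·σ_{2,q}^{a_2}⋯σ_{1,q}^{-a_{2m-1}}·σ_{2,q}^{a_{2m}}. -/
def prodReg : List ℤ → (Matrix (Fin 2) (Fin 2) K)ˣ
  | [] => 1
  | [a] => σ1 ^ (-a)
  | a :: b :: rest => σ1 ^ (-a) * σ2 ^ b * prodReg rest

/-- The sum a_2 + a_4 + ⋯ of the even-indexed entries. -/
def evenSum : List ℤ → ℤ
  | [] => 0
  | [_] => 0
  | _ :: b :: rest => b + evenSum rest

/-- Möbius action of a 2×2 matrix on ℚ(q). -/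
def mobius (A : Matrix (Fin 2) (Fin 2) K) (x : K) : K :=
  (A 0 0 * x + A 0 1) / (A 1 0 * x + A 1 1)

/-!
E^♭ and E^♯ satisfy the same three-term recursion in the last entry, and differ only in the last
diagonal entry, [c]^♭ = [c]^♯ − q^{c−1}(1 − q); expanding along the last row therefore gives
E^♭(L, c) = E^♯(L, c) − q^{c−1}(1 − q) E^♯(L). Rewriting both sides of the identity through
E^♯(L), E^♯(L, b) and E^♯(L, b, 2), with [2]^♯ = 1 + q, their difference becomes (1 − q) times the
last-row expansion of E^♯(L, b, 2). This works for every nonempty list, whatever its last entry b.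
-/

lemma q_ne_zero : q ≠ 0 := RatFunc.X_ne_zero

lemma q_ne_one : q ≠ 1 := by
  intro h
  simpa [q, RatFunc.eval] using congrArg (RatFunc.eval (RingHom.id ℚ) 0) h

lemma EsharpX_append_pair (x : K) (b c : ℤ) : ∀ L : List ℤ,
    EsharpX x (L ++ [b, c]) = qsX x c * EsharpX x (L ++ [b]) - x ^ (b - 1) * EsharpX x L
  | [] => by simp only [List.nil_append, EsharpX]; ring
  | [a] => by simp only [List.cons_append, List.nil_append, EsharpX]; ring
  | a :: a' :: L => by
      have h₁ := EsharpX_append_pair x b c (a' :: L)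
      have h₂ := EsharpX_append_pair x b c L
      simp only [List.cons_append] at h₁ h₂ ⊢
      simp only [EsharpX, h₁, h₂]
      ring

section

variable {x : K}

lemma qfX_eq_qsX_sub (hx : x ≠ 0) (c : ℤ) : qfX x c = qsX x c - x ^ (c - 1) * (1 - x) := by
  have hc : x ^ c = x ^ (c - 1) * x := by rw [← zpow_add_one₀ hx, sub_add_cancel]
  have hc1 : x ^ (c + 1) = x ^ (c - 1) * x * x := by rw [← hc, zpow_add_one₀ hx]
  calc qfX x c = ((1 - x ^ c) - x ^ (c - 1) * ((1 - x) * (1 - x))) / (1 - x) := by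
        rw [qfX, hc, hc1]; ring
    _ = qsX x c - x ^ (c - 1) * ((1 - x) * (1 - x) / (1 - x)) := by rw [qsX]; ring
    -- `(1 - x) * (1 - x) / (1 - x) = 1 - x` holds even when `x = 1`
    _ = qsX x c - x ^ (c - 1) * (1 - x) := by rw [mul_self_div_self]

lemma qsX_two (hx : x ≠ 1) : qsX x 2 = 1 + x := by
  rw [qsX, div_eq_iff (sub_ne_zero.mpr hx.symm), zpow_two]
  ring

lemma EflatX_append_singleton (hx : x ≠ 0) (c : ℤ) : ∀ L : List ℤ,
    EflatX x (L ++ [c]) = EsharpX x (L ++ [c]) - x ^ (c - 1) * (1 - x) * EsharpX x L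
  | [] => by simp only [List.nil_append, EflatX, EsharpX, qfX_eq_qsX_sub hx]; ring
  | [a] => by
      simp only [List.cons_append, List.nil_append, EflatX, EsharpX, qfX_eq_qsX_sub hx]; ring
  | a :: a' :: L => by
      have h₁ := EflatX_append_singleton hx c (a' :: L)
      have h₂ := EflatX_append_singleton hx c L
      simp only [List.cons_append] at h₁ h₂ ⊢
      simp only [EflatX, EsharpX, h₁, h₂]
      ring

lemma EflatX_append_two_sub (hx₀ : x ≠ 0) (hx₁ : x ≠ 1) {L : List ℤ} (hL : L ≠ []) :
    EflatX x (L ++ [2]) - EflatX x L = EsharpX x (L ++ [2, 2]) - EsharpX x (L ++ [2]) := by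
  obtain ⟨L, b, rfl⟩ := (List.eq_nil_or_concat L).resolve_left hL
  have hflat₁ := EflatX_append_singleton hx₀ 2 (L ++ [b])
  have hflat₀ := EflatX_append_singleton hx₀ b L
  have hsharp₂ := EsharpX_append_pair x 2 2 (L ++ [b])
  have hsharp₁ := EsharpX_append_pair x b 2 L
  simp only [List.concat_eq_append, List.append_assoc, List.cons_append, List.nil_append]
    at hflat₁ hsharp₂ ⊢
  rw [hflat₁, hflat₀, hsharp₂, hsharp₁, qsX_two hx₁, show (2 : ℤ) - 1 = 1 by norm_num, zpow_one]
  ring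

end

theorem Eflat_diff_eq_Esharp_diff_general (cs : List ℤ) (cl : ℤ)
    (n : ℕ) (hn : 1 ≤ n) :
    Eflat ((cs ++ [cl]) ++ List.replicate n 2)
        - Eflat ((cs ++ [cl]) ++ List.replicate (n - 1) 2)
      = Esharp ((cs ++ [cl]) ++ List.replicate (n + 1) 2)
        - Esharp ((cs ++ [cl]) ++ List.replicate n 2) := by
  obtain ⟨m, rfl⟩ := Nat.exists_eq_add_of_le' hn
  have hL : cs ++ [cl] ++ List.replicate m 2 ≠ [] := by simp
  have h := EflatX_append_two_sub q_ne_zero q_ne_one hL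
  simpa only [Eflat, Esharp, Nat.add_sub_cancel, List.replicate_succ', List.append_assoc,
    List.cons_append, List.nil_append] using h

/-- for k > l ≥ 1 (so `n = k - l ≥ 1`),
E^♭_k(c_1,…,c_l,2^{(k−l)}) − E^♭_{k−1}(c_1,…,c_l,2^{(k−l−1)})
  = E^♯_{k+1}(c_1,…,c_l,2^{(k−l+1)}) − E^♯_k(c_1,…,c_l,2^{(k−l)}). -/
theorem Eflat_diff_eq_Esharp_diff (cs : List ℤ) (cl : ℤ) (hcl : 2 < cl)
    (n : ℕ) (hn : 1 ≤ n) :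
    Eflat ((cs ++ [cl]) ++ List.replicate n 2)
        - Eflat ((cs ++ [cl]) ++ List.replicate (n - 1) 2)
      = Esharp ((cs ++ [cl]) ++ List.replicate (n + 1) 2)
        - Esharp ((cs ++ [cl]) ++ List.replicate n 2) :=
  Eflat_diff_eq_Esharp_diff_general cs cl n hn
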